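/- Let n ≥ 2 and let W_1,…,W_n be bounded operators on a complex Hilbert space L satisfying W_i^* W_j = δ_{ij} I and W_1 W_1^* + ⋯ + W_n W_n^* = I. Suppose the tuple acts irreducibly: the only closed subspaces N of L with W_i N ⊆ N and W_i^* N ⊆ N for all i are N = {0} and N = L. Then the maximal commuting piece space L^c(W) has dimension at most 1; moreover, if L^c(W) ≠ {0} then there exist a unit vector x spanning L^c(W) and scalars w_1,…,w_n ∈ ℂ with Σ_i |w_i|² = 1 such that W_i^* x = \overline{w_i} x for all i. -/

import Mathlib

/-!
On the maximal commuting piece `K = L^c(W)` the adjoints `W_i^*` commute, so the compression of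
`W_k^*` to `K` is invariant under `Φ(X) = ∑ᵢ W_i X W_i^*` (`cpMap W`). For a Cuntz tuple `Φ` is a
contraction, and a weak-operator limit along an ultrafilter of the Cesàro means of `Φᵐ(b)` is a
fixed point of `Φ` with the same compression to `K` as `b` (whenever that compression is
`Φ`-invariant). Fixed points of `Φ` commute with all `W_i` and `W_i^*`, so by irreducibility they
are scalars. Hence every `Φ`-invariant compression to `K` is scalar. Applied to `W_k^*` this makes
every vector of `K` a joint eigenvector with common eigenvalues `conj w_k`; then every compression
to `K` is `Φ`-invariant, and applied to the rank-one projection onto a unit vector `x₀ ∈ K` it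
gives `⟪x, y⟫ = ⟪x, x₀⟫ ⟪x₀, y⟫` on `K`, that is `K = ℂ x₀`.
-/

open ContinuousLinearMap

noncomputable def wordProd {n : ℕ} {L : Type*} [NormedAddCommGroup L] [InnerProductSpace ℂ L]
    (R : Fin n → L →L[ℂ] L) (α : List (Fin n)) : L →L[ℂ] L :=
  (α.map R).prod

/-- The maximal commuting piece space `L^c(R)` as a submodule:
`{x : (R_i^* R_j^* − R_j^* R_i^*)(R^α)^* x = 0 for all i, j, α}`. -/
noncomputable def commPieceSub {n : ℕ} {L : Type*} [NormedAddCommGroup L]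
    [InnerProductSpace ℂ L] [CompleteSpace L] (R : Fin n → L →L[ℂ] L) : Submodule ℂ L :=
  ⨅ (i : Fin n) (j : Fin n) (α : List (Fin n)),
    LinearMap.ker (((adjoint (R i) ∘L adjoint (R j) - adjoint (R j) ∘L adjoint (R i)) ∘L
      adjoint (wordProd R α) : L →L[ℂ] L) : L →ₗ[ℂ] L)

open Filter Topology InnerProductSpace ComplexStarModule

theorem norm_birkhoffAverage_le {𝕜 α E : Type*} [RCLike 𝕜] [NormedAddCommGroup E]
    [NormedSpace 𝕜 E] {f : α → α} {g : α → E} {x : α} {C : ℝ} (hC : 0 ≤ C)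
    (h : ∀ m, ‖g (f^[m] x)‖ ≤ C) (M : ℕ) : ‖birkhoffAverage 𝕜 f g M x‖ ≤ C := by
  rcases M.eq_zero_or_pos with rfl | hM
  · simpa [birkhoffAverage_zero] using hC
  rw [birkhoffAverage, birkhoffSum, norm_smul, norm_inv, RCLike.norm_natCast,
    inv_mul_le_iff₀ (by positivity)]
  calc ‖∑ m ∈ Finset.range M, g (f^[m] x)‖ ≤ ∑ _m ∈ Finset.range M, C :=
        norm_sum_le_of_le _ fun m _ => h m
    _ = M * C := by simp

section Hilbert

variable {L : Type*} [NormedAddCommGroup L] [InnerProductSpace ℂ L] [CompleteSpace L]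

theorem exists_tendsto_inner_apply_of_norm_le {α : Type*} (l : Ultrafilter α)
    (X : α → L →L[ℂ] L) {C : ℝ} (hX : ∀ m, ‖X m‖ ≤ C) :
    ∃ A : L →L[ℂ] L, ∀ u v, Tendsto (fun m => ⟪X m u, v⟫_ℂ) l (𝓝 ⟪A u, v⟫_ℂ) := by
  have hbound : ∀ m u v, ‖⟪X m u, v⟫_ℂ‖ ≤ C * ‖u‖ * ‖v‖ := fun m u v =>
    (norm_inner_le_norm _ _).trans <|
      mul_le_mul_of_nonneg_right ((X m).le_of_opNorm_le (hX m) u) (norm_nonneg v)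
  have hconv : ∀ u v, ∃ c, Tendsto (fun m => ⟪X m u, v⟫_ℂ) l (𝓝 c) := fun u v => by
    obtain ⟨c, -, hc⟩ := (isCompact_closedBall (0 : ℂ) (C * ‖u‖ * ‖v‖)).ultrafilter_le_nhds
      (l.map fun m => ⟪X m u, v⟫_ℂ) (le_principal_iff.2 <| Ultrafilter.mem_map.2 <|
        univ_mem' fun m => by simpa using hbound m u v)
    exact ⟨c, hc⟩
  choose φ hφ using hconv
  have add_left : ∀ u u' v, φ (u + u') v = φ u v + φ u' v := fun u u' v =>
    tendsto_nhds_unique (hφ _ _) (by simpa [inner_add_left] using (hφ u v).add (hφ u' v))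
  have smul_left : ∀ (c : ℂ) u v, φ (c • u) v = starRingEnd ℂ c * φ u v := fun c u v =>
    tendsto_nhds_unique (hφ _ _) <| by
      simpa only [map_smul, inner_smul_left] using (hφ u v).const_mul (starRingEnd ℂ c)
  have add_right : ∀ u v v', φ u (v + v') = φ u v + φ u v' := fun u v v' =>
    tendsto_nhds_unique (hφ _ _) (by simpa [inner_add_right] using (hφ u v).add (hφ u v'))
  have smul_right : ∀ (c : ℂ) u v, φ u (c • v) = c * φ u v := fun c u v =>
    tendsto_nhds_unique (hφ _ _) (by simpa only [inner_smul_right] using (hφ u v).const_mul c)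
  let B : L →L⋆[ℂ] L →L[ℂ] ℂ :=
    LinearMap.mkContinuous₂
      (LinearMap.mk₂'ₛₗ (starRingEnd ℂ) (RingHom.id ℂ) φ add_left smul_left add_right smul_right)
      C fun u v => le_of_tendsto (hφ u v).norm (Eventually.of_forall (hbound · u v))
  exact ⟨continuousLinearMapOfBilin B, fun u v => by
    simpa [continuousLinearMapOfBilin_apply, B] using hφ u v⟩

theorem cfc_mem_centralizer {s : Set (L →L[ℂ] L)} {S : L →L[ℂ] L}
    (hS : S ∈ StarSubalgebra.centralizer ℂ s) (f : ℝ → ℝ) :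
    cfc f S ∈ StarSubalgebra.centralizer ℂ s := by
  rw [StarSubalgebra.mem_centralizer_iff] at hS ⊢
  exact fun g hg => ⟨(Commute.cfc_real (hS g hg).1.symm f).eq.symm,
    (Commute.cfc_real (hS g hg).2.symm f).eq.symm⟩

variable {ι : Type*} {W : ι → L →L[ℂ] L}

def IsIrreducibleTuple (W : ι → L →L[ℂ] L) : Prop :=
  ∀ N : Submodule ℂ L, IsClosed (N : Set L) →
    (∀ i, ∀ x ∈ N, W i x ∈ N ∧ adjoint (W i) x ∈ N) → N = ⊥ ∨ N = ⊤

namespace IsIrreducibleTuple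

theorem injective_or_eq_zero (hW : IsIrreducibleTuple W) {T : L →L[ℂ] L}
    (hT : T ∈ StarSubalgebra.centralizer ℂ (Set.range W)) :
    Function.Injective T ∨ T = 0 := by
  rw [StarSubalgebra.mem_centralizer_iff] at hT
  refine (hW (LinearMap.ker (T : L →ₗ[ℂ] L)) (isClosed_ker T) fun i x hx => ?_).imp
    (fun hbot => LinearMap.ker_eq_bot.1 hbot) fun htop => ?_
  · obtain ⟨hWT, hWT'⟩ := hT _ ⟨i, rfl⟩
    rw [star_eq_adjoint] at hWT'
    simp only [LinearMap.mem_ker, coe_coe] at hx ⊢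
    exact ⟨by simpa [hx] using (DFunLike.congr_fun hWT x).symm,
      by simpa [hx] using (DFunLike.congr_fun hWT' x).symm⟩
  · ext x
    exact DFunLike.congr_fun (LinearMap.ker_eq_top.1 htop) x

theorem exists_eq_algebraMap_of_isSelfAdjoint (hW : IsIrreducibleTuple W) {S : L →L[ℂ] L}
    (hS : IsSelfAdjoint S) (hSW : S ∈ StarSubalgebra.centralizer ℂ (Set.range W)) :
    ∃ r : ℝ, S = algebraMap ℝ (L →L[ℂ] L) r := by
  rcases subsingleton_or_nontrivial L with hL | hL
  · exact ⟨0, ext fun x => Subsingleton.elim _ _⟩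
  suffices hsub : (spectrum ℝ S).Subsingleton by
    obtain ⟨r, hr⟩ := ContinuousFunctionalCalculus.spectrum_nonempty (R := ℝ) S hS
    exact ⟨r, CFC.eq_algebraMap_of_spectrum_subset_singleton S r fun x hx => hsub hx hr⟩
  intro r₁ hr₁ r₂ hr₂
  by_contra hne
  wlog hlt : r₁ < r₂ generalizing r₁ r₂
  · exact this hr₂ hr₁ (Ne.symm hne) (lt_of_le_of_ne (not_lt.1 hlt) (Ne.symm hne))
  have hcfc_ne : ∀ k : ℝ → ℝ, Continuous k → ∀ r ∈ spectrum ℝ S, k r ≠ 0 → cfc k S ≠ 0 :=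
    fun k hk r hr hkr heq => hkr <| by
      simpa using eqOn_of_cfc_eq_cfc (heq.trans (cfc_zero ℝ S).symm) hk.continuousOn
        continuousOn_const hS hr
  -- `f` and `g` live on opposite sides of `m`, so `f(S) g(S) = 0`; but `ker f(S)` is a reducing
  -- subspace, so `f(S)` is injective or zero.
  set m := (r₁ + r₂) / 2 with hm
  set f : ℝ → ℝ := fun x => max (m - x) 0
  set g : ℝ → ℝ := fun x => max (x - m) 0
  have hfg : cfc f S * cfc g S = 0 := by
    rw [← cfc_mul f g S (by fun_prop) (by fun_prop), ← cfc_zero ℝ S]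
    refine cfc_congr fun x _ => ?_
    rcases le_total x m with hx | hx <;> simp [f, g, hx]
  rcases hW.injective_or_eq_zero (cfc_mem_centralizer hSW f) with hinj | hzero
  · refine hcfc_ne g (by fun_prop) r₂ hr₂ (lt_max_of_lt_left (by linarith)).ne'
      (ext fun x => hinj ?_)
    simpa using DFunLike.congr_fun hfg x
  · exact hcfc_ne f (by fun_prop) r₁ hr₁ (lt_max_of_lt_left (by linarith)).ne' hzero

theorem exists_eq_algebraMap (hW : IsIrreducibleTuple W) {A : L →L[ℂ] L}
    (hA : A ∈ StarSubalgebra.centralizer ℂ (Set.range W)) :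
    ∃ c : ℂ, A = algebraMap ℂ (L →L[ℂ] L) c := by
  have hstar := star_mem hA
  obtain ⟨r, hr⟩ := hW.exists_eq_algebraMap_of_isSelfAdjoint (ℜ A).2 <| by
    rw [realPart_apply_coe, ← Complex.coe_smul]
    exact SMulMemClass.smul_mem _ (add_mem hA hstar)
  obtain ⟨s, hs⟩ := hW.exists_eq_algebraMap_of_isSelfAdjoint (ℑ A).2 <| by
    rw [imaginaryPart_apply_coe, ← Complex.coe_smul]
    exact SMulMemClass.smul_mem _ (SMulMemClass.smul_mem _ (sub_mem hA hstar))
  refine ⟨r + s * Complex.I, ?_⟩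
  rw [← realPart_add_I_smul_imaginaryPart A, hr, hs]
  simp [Algebra.algebraMap_eq_smul_one, add_smul, mul_smul, smul_comm Complex.I]

end IsIrreducibleTuple

theorem adjoint_apply_apply_eq_ite [DecidableEq ι]
    (hisom : ∀ i j, adjoint (W i) ∘L W j = if i = j then 1 else 0) (i j : ι) (z : L) :
    adjoint (W i) (W j z) = if i = j then z else 0 := by
  rw [← comp_apply, hisom]
  split_ifs <;> rfl

variable [Fintype ι]

theorem sum_apply_adjoint_apply (hcuntz : ∑ i, W i ∘L adjoint (W i) = 1) (z : L) :
    ∑ i, W i (adjoint (W i) z) = z := by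
  simpa using DFunLike.congr_fun hcuntz z

theorem sum_norm_adjoint_apply_sq (hcuntz : ∑ i, W i ∘L adjoint (W i) = 1) (u : L) :
    ∑ i, ‖adjoint (W i) u‖ ^ 2 = ‖u‖ ^ 2 := by
  have h : ∑ i, ⟪adjoint (W i) u, adjoint (W i) u⟫_ℂ = ⟪u, u⟫_ℂ := by
    simp_rw [adjoint_inner_right, ← sum_inner, sum_apply_adjoint_apply hcuntz]
  simp_rw [inner_self_eq_norm_sq_to_K] at h
  exact_mod_cast h

theorem norm_sum_apply_sq [DecidableEq ι]
    (hisom : ∀ i j, adjoint (W i) ∘L W j = if i = j then 1 else 0) (y : ι → L) :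
    ‖∑ i, W i (y i)‖ ^ 2 = ∑ i, ‖y i‖ ^ 2 := by
  have h : ⟪∑ i, W i (y i), ∑ j, W j (y j)⟫_ℂ = ∑ i, ⟪y i, y i⟫_ℂ := by
    simp_rw [sum_inner, inner_sum, ← adjoint_inner_right, adjoint_apply_apply_eq_ite hisom,
      apply_ite, inner_zero_right, Finset.sum_ite_eq, Finset.mem_univ, if_true]
  simp_rw [inner_self_eq_norm_sq_to_K] at h
  exact_mod_cast h

theorem sum_norm_sq_eq_one_of_adjoint_eq_smul (hcuntz : ∑ i, W i ∘L adjoint (W i) = 1) {x : L}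
    (hx : ‖x‖ = 1) {w : ι → ℂ} (hw : ∀ i, adjoint (W i) x = starRingEnd ℂ (w i) • x) :
    ∑ i, ‖w i‖ ^ 2 = 1 := by
  simpa [hw, norm_smul, hx] using sum_norm_adjoint_apply_sq hcuntz x

variable (W) in
noncomputable def cpMap : Module.End ℂ (L →L[ℂ] L) :=
  ∑ i, LinearMap.mulLeftRight ℂ (W i, adjoint (W i))

theorem cpMap_apply (X : L →L[ℂ] L) : cpMap W X = ∑ i, W i * X * adjoint (W i) := by
  simp [cpMap, LinearMap.mulLeftRight_apply]

theorem inner_cpMap_apply (X : L →L[ℂ] L) (u v : L) :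
    ⟪cpMap W X u, v⟫_ℂ = ∑ i, ⟪X (adjoint (W i) u), adjoint (W i) v⟫_ℂ := by
  simp [cpMap_apply, adjoint_inner_right]

theorem inner_cpMap_iterate_apply_eq {K : Set L} (hK : ∀ i, ∀ x ∈ K, adjoint (W i) x ∈ K)
    {b : L →L[ℂ] L} (hb : ∀ x ∈ K, ∀ y ∈ K, ⟪cpMap W b x, y⟫_ℂ = ⟪b x, y⟫_ℂ) (m : ℕ) :
    ∀ x ∈ K, ∀ y ∈ K, ⟪(cpMap W)^[m] b x, y⟫_ℂ = ⟪b x, y⟫_ℂ := by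
  induction m with
  | zero => simp
  | succ m ih =>
    intro x hx y hy
    rw [Function.iterate_succ_apply', inner_cpMap_apply, ← hb x hx y hy, inner_cpMap_apply]
    exact Finset.sum_congr rfl fun i _ => ih _ (hK i x hx) _ (hK i y hy)

theorem inner_cpMap_apply_of_adjoint_eq_smul {K : Set L} {w : ι → ℂ}
    (hw1 : ∑ i, ‖w i‖ ^ 2 = 1) (hw : ∀ i, ∀ x ∈ K, adjoint (W i) x = starRingEnd ℂ (w i) • x)
    (b : L →L[ℂ] L) {x y : L} (hx : x ∈ K) (hy : y ∈ K) :
    ⟪cpMap W b x, y⟫_ℂ = ⟪b x, y⟫_ℂ := by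
  simp only [inner_cpMap_apply, hw _ x hx, hw _ y hy, map_smul, inner_smul_left,
    inner_smul_right, Complex.conj_conj, ← mul_assoc, ← Finset.sum_mul, Complex.conj_mul']
  have hw1' : ∑ i, (‖w i‖ : ℂ) ^ 2 = 1 := by exact_mod_cast hw1
  rw [hw1', one_mul]

variable [DecidableEq ι]

theorem norm_cpMap_apply_le (hisom : ∀ i j, adjoint (W i) ∘L W j = if i = j then 1 else 0)
    (hcuntz : ∑ i, W i ∘L adjoint (W i) = 1) (X : L →L[ℂ] L) : ‖cpMap W X‖ ≤ ‖X‖ := by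
  refine opNorm_le_bound _ (norm_nonneg X) fun u => le_of_pow_le_pow_left₀ two_ne_zero
    (by positivity) ?_
  calc ‖cpMap W X u‖ ^ 2 = ∑ i, ‖X (adjoint (W i) u)‖ ^ 2 := by
        simp [cpMap_apply, norm_sum_apply_sq hisom]
    _ ≤ ∑ i, (‖X‖ * ‖adjoint (W i) u‖) ^ 2 := by gcongr; exact X.le_opNorm _
    _ = (‖X‖ * ‖u‖) ^ 2 := by
        simp_rw [mul_pow, ← Finset.mul_sum, sum_norm_adjoint_apply_sq hcuntz]

theorem norm_cpMap_iterate_le (hisom : ∀ i j, adjoint (W i) ∘L W j = if i = j then 1 else 0)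
    (hcuntz : ∑ i, W i ∘L adjoint (W i) = 1) (X : L →L[ℂ] L) (m : ℕ) :
    ‖(cpMap W)^[m] X‖ ≤ ‖X‖ := by
  induction m with
  | zero => rfl
  | succ m ih =>
    rw [Function.iterate_succ_apply']
    exact (norm_cpMap_apply_le hisom hcuntz _).trans ih

theorem mem_centralizer_of_cpMap_eq_self
    (hisom : ∀ i j, adjoint (W i) ∘L W j = if i = j then 1 else 0) {A : L →L[ℂ] L}
    (hA : cpMap W A = A) : A ∈ StarSubalgebra.centralizer ℂ (Set.range W) := by
  have hisom' : ∀ i j, adjoint (W i) * W j = if i = j then 1 else 0 := hisom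
  rw [StarSubalgebra.mem_centralizer_iff]
  rintro _ ⟨j, rfl⟩
  rw [star_eq_adjoint]
  constructor
  · conv_rhs => rw [← hA]
    simp [cpMap_apply, Finset.sum_mul, mul_assoc, hisom']
  · conv_lhs => rw [← hA]
    simp [cpMap_apply, Finset.mul_sum, ← mul_assoc, hisom']

theorem exists_cpMap_eq_self (hisom : ∀ i j, adjoint (W i) ∘L W j = if i = j then 1 else 0)
    (hcuntz : ∑ i, W i ∘L adjoint (W i) = 1) (a : L →L[ℂ] L) :
    ∃ A, cpMap W A = A ∧ ∀ u v, (∀ m, ⟪(cpMap W)^[m] a u, v⟫_ℂ = ⟪a u, v⟫_ℂ) →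
      ⟪A u, v⟫_ℂ = ⟪a u, v⟫_ℂ := by
  set Φ := cpMap W
  set avg : ℕ → L →L[ℂ] L := fun M => birkhoffAverage ℂ Φ id M a
  have horbit : ∀ m, ‖Φ^[m] a‖ ≤ ‖a‖ := norm_cpMap_iterate_le hisom hcuntz a
  let U : Ultrafilter ℕ := .of atTop
  obtain ⟨A, hA⟩ := exists_tendsto_inner_apply_of_norm_le U avg
    (norm_birkhoffAverage_le (norm_nonneg a) horbit)
  have hdefect : Tendsto (fun M => Φ (avg M) - avg M) atTop (𝓝 0) := by
    refine (tendsto_birkhoffAverage_apply_sub_birkhoffAverage (𝕜 := ℂ) (f := Φ) (g := id)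
      (x := a) (isBounded_iff_forall_norm_le.2 ⟨‖a‖, ?_⟩)).congr fun M => ?_
    · rintro _ ⟨m, rfl⟩
      exact horbit m
    · simp [avg, birkhoffAverage, birkhoffSum, ← Function.iterate_succ_apply' Φ,
        Function.iterate_succ_apply]
  have hcoeff : ∀ u v, Continuous fun T : L →L[ℂ] L => ⟪T u, v⟫_ℂ := by fun_prop
  refine ⟨A, ext fun u => ext_inner_right ℂ fun v => ?_, fun u v h => ?_⟩
  · have hΦ : Tendsto (fun M => ⟪Φ (avg M) u, v⟫_ℂ) U (𝓝 ⟪Φ A u, v⟫_ℂ) := by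
      simp_rw [Φ, inner_cpMap_apply]
      exact tendsto_finsetSum _ fun i _ => hA _ _
    have hsub : Tendsto (fun M => ⟪(Φ (avg M) - avg M) u, v⟫_ℂ) U (𝓝 0) := by
      simpa [Function.comp_def] using
        ((hcoeff u v).tendsto 0).comp (hdefect.mono_left (Ultrafilter.of_le _))
    exact tendsto_nhds_unique hΦ (by simpa [inner_sub_left] using (hA u v).add hsub)
  · refine tendsto_nhds_unique (hA u v) (tendsto_const_nhds.congr' ?_)
    filter_upwards [Ultrafilter.of_le atTop (eventually_ge_atTop 1)] with M hM
    have hM' : (M : ℂ) ≠ 0 := by exact_mod_cast (Nat.one_le_iff_ne_zero.1 hM)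
    simp only [avg, birkhoffAverage, birkhoffSum, id, smul_apply, sum_apply, inner_smul_left,
      sum_inner, h, Finset.sum_const, Finset.card_range, nsmul_eq_mul, map_inv₀, map_natCast]
    field_simp

theorem IsIrreducibleTuple.exists_inner_apply_eq_mul_inner (hW : IsIrreducibleTuple W)
    (hisom : ∀ i j, adjoint (W i) ∘L W j = if i = j then 1 else 0)
    (hcuntz : ∑ i, W i ∘L adjoint (W i) = 1)
    {K : Set L} (hK : ∀ i, ∀ x ∈ K, adjoint (W i) x ∈ K) {b : L →L[ℂ] L}
    (hb : ∀ x ∈ K, ∀ y ∈ K, ⟪cpMap W b x, y⟫_ℂ = ⟪b x, y⟫_ℂ) :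
    ∃ c : ℂ, ∀ x ∈ K, ∀ y ∈ K, ⟪b x, y⟫_ℂ = c * ⟪x, y⟫_ℂ := by
  obtain ⟨A, hAfix, hAb⟩ := exists_cpMap_eq_self hisom hcuntz b
  obtain ⟨c, rfl⟩ := hW.exists_eq_algebraMap (mem_centralizer_of_cpMap_eq_self hisom hAfix)
  refine ⟨starRingEnd ℂ c, fun x hx y hy => ?_⟩
  rw [← hAb x y fun m => inner_cpMap_iterate_apply_eq hK hb m x hx y hy]
  simp [mul_comm]

theorem IsIrreducibleTuple.le_span_singleton (hW : IsIrreducibleTuple W)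
    (hisom : ∀ i j, adjoint (W i) ∘L W j = if i = j then 1 else 0)
    (hcuntz : ∑ i, W i ∘L adjoint (W i) = 1) {K : Submodule ℂ L}
    (hK : ∀ i, ∀ x ∈ K, adjoint (W i) x ∈ K) {w : ι → ℂ} (hw1 : ∑ i, ‖w i‖ ^ 2 = 1)
    (hw : ∀ i, ∀ x ∈ K, adjoint (W i) x = starRingEnd ℂ (w i) • x) {x₀ : L} (hx₀ : x₀ ∈ K)
    (hx₀1 : ‖x₀‖ = 1) : K ≤ Submodule.span ℂ {x₀} := by
  obtain ⟨c, hc⟩ := hW.exists_inner_apply_eq_mul_inner hisom hcuntz (K := K) hK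
    (b := rankOne ℂ x₀ x₀) fun x hx y hy => inner_cpMap_apply_of_adjoint_eq_smul hw1 hw _ hx hy
  have hc1 : c = 1 := by simpa [hx₀1] using (hc x₀ hx₀ x₀ hx₀).symm
  intro y hy
  set z := y - ⟪x₀, y⟫_ℂ • x₀
  have hz : z ∈ K := sub_mem hy (K.smul_mem _ hx₀)
  have hx₀z : ⟪x₀, z⟫_ℂ = 0 := by simp [z, hx₀1]
  have hzz : ⟪z, z⟫_ℂ = 0 := by simpa [hc1, hx₀z] using (hc z hz z hz).symm
  exact Submodule.mem_span_singleton.2 ⟨_, (sub_eq_zero.1 (inner_self_eq_zero.1 hzz)).symm⟩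

end Hilbert

section CommutingPiece

variable {n : ℕ} {L : Type*} [NormedAddCommGroup L] [InnerProductSpace ℂ L] [CompleteSpace L]
  {W : Fin n → L →L[ℂ] L} {x : L}

theorem mem_commPieceSub_iff : x ∈ commPieceSub W ↔ ∀ i j α,
    adjoint (W i) (adjoint (W j) (adjoint (wordProd W α) x)) =
      adjoint (W j) (adjoint (W i) (adjoint (wordProd W α) x)) := by
  simp [commPieceSub, sub_eq_zero]

theorem adjoint_mem_commPieceSub (hx : x ∈ commPieceSub W) (k : Fin n) :
    adjoint (W k) x ∈ commPieceSub W := by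
  rw [mem_commPieceSub_iff] at hx ⊢
  intro i j α
  have h : adjoint (wordProd W (k :: α)) = adjoint (wordProd W α) ∘L adjoint (W k) :=
    adjoint_comp (W k) (wordProd W α)
  simpa [h] using hx i j (k :: α)

theorem adjoint_comm_of_mem_commPieceSub (hx : x ∈ commPieceSub W) (i j : Fin n) :
    adjoint (W i) (adjoint (W j) x) = adjoint (W j) (adjoint (W i) x) := by
  simpa [wordProd, adjoint_one] using mem_commPieceSub_iff.1 hx i j []

theorem cpMap_adjoint_apply_of_mem_commPieceSub (hcuntz : ∑ i, W i ∘L adjoint (W i) = 1)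
    (hx : x ∈ commPieceSub W) (k : Fin n) :
    cpMap W (adjoint (W k)) x = adjoint (W k) x := by
  simp [cpMap_apply, adjoint_comm_of_mem_commPieceSub hx k, sum_apply_adjoint_apply hcuntz]

theorem IsIrreducibleTuple.exists_adjoint_eq_smul_of_mem_commPieceSub
    (hW : IsIrreducibleTuple W)
    (hisom : ∀ i j, adjoint (W i) ∘L W j = if i = j then 1 else 0)
    (hcuntz : ∑ i, W i ∘L adjoint (W i) = 1) :
    ∃ w : Fin n → ℂ, ∀ i, ∀ x ∈ commPieceSub W, adjoint (W i) x = starRingEnd ℂ (w i) • x := by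
  have hK : ∀ i, ∀ x ∈ commPieceSub W, adjoint (W i) x ∈ commPieceSub W :=
    fun i _ hx => adjoint_mem_commPieceSub hx i
  choose w hw using fun k => hW.exists_inner_apply_eq_mul_inner hisom hcuntz hK
    (b := adjoint (W k)) fun x hx y _ => by rw [cpMap_adjoint_apply_of_mem_commPieceSub hcuntz hx]
  refine ⟨w, fun k x hx => ?_⟩
  set z := adjoint (W k) x - starRingEnd ℂ (w k) • x
  have hz : z ∈ commPieceSub W := sub_mem (hK k x hx) (Submodule.smul_mem _ _ hx)
  have hzz : ⟪z, z⟫_ℂ = 0 := by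
    rw [inner_sub_left, inner_smul_left, hw k x hx z hz, Complex.conj_conj, sub_self]
  exact sub_eq_zero.1 (inner_self_eq_zero.1 hzz)

end CommutingPiece

theorem stmt13_general {n : ℕ} {L : Type*} [NormedAddCommGroup L]
    [InnerProductSpace ℂ L] [CompleteSpace L]
    (W : Fin n → L →L[ℂ] L)
    (hisom : ∀ i j : Fin n, adjoint (W i) ∘L W j = if i = j then 1 else 0)
    (hcuntz : ∑ i : Fin n, W i ∘L adjoint (W i) = 1)
    (hirr : ∀ N : Submodule ℂ L, IsClosed (N : Set L) →
      (∀ i : Fin n, ∀ x ∈ N, W i x ∈ N ∧ adjoint (W i) x ∈ N) → N = ⊥ ∨ N = ⊤) :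
    Module.rank ℂ ↥(commPieceSub W) ≤ 1 ∧
    (commPieceSub W ≠ ⊥ → ∃ (x : L) (w : Fin n → ℂ), ‖x‖ = 1 ∧
      Submodule.span ℂ {x} = commPieceSub W ∧ (∑ i : Fin n, ‖w i‖ ^ 2) = 1 ∧
      ∀ i : Fin n, adjoint (W i) x = (starRingEnd ℂ) (w i) • x) := by
  have hW : IsIrreducibleTuple W := hirr
  obtain ⟨w, hw⟩ := hW.exists_adjoint_eq_smul_of_mem_commPieceSub hisom hcuntz
  have hunit : commPieceSub W ≠ ⊥ → ∃ x ∈ commPieceSub W, ‖x‖ = 1 := fun hne => by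
    have := Submodule.nontrivial_iff_ne_bot.2 hne
    obtain ⟨⟨x, hx⟩, hx1⟩ := exists_norm_eq (commPieceSub W) zero_le_one
    exact ⟨x, hx, hx1⟩
  have hspan : ∀ x ∈ commPieceSub W, ‖x‖ = 1 →
      ∑ i, ‖w i‖ ^ 2 = 1 ∧ Submodule.span ℂ {x} = commPieceSub W := fun x hx hx1 => by
    have hw1 := sum_norm_sq_eq_one_of_adjoint_eq_smul hcuntz hx1 fun i => hw i x hx
    refine ⟨hw1, le_antisymm (Submodule.span_le.2 (Set.singleton_subset_iff.2 hx)) ?_⟩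
    exact hW.le_span_singleton hisom hcuntz (fun i _ hy => adjoint_mem_commPieceSub hy i)
      hw1 hw hx hx1
  refine ⟨?_, fun hne => ?_⟩
  · by_cases hbot : commPieceSub W = ⊥
    · rw [hbot, rank_bot]
      exact zero_le_one
    · obtain ⟨x, hx, hx1⟩ := hunit hbot
      rw [← (hspan x hx hx1).2]
      simpa using rank_span_le (R := ℂ) ({x} : Set L)
  · obtain ⟨x, hx, hx1⟩ := hunit hne
    exact ⟨x, w, hx1, (hspan x hx hx1).2, (hspan x hx hx1).1, fun i => hw i x hx⟩

/-- an irreducible Cuntz tuple has maximal commuting piece space of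
dimension at most one; if it is nonzero it is spanned by a unit vector `x` which is a
joint eigenvector: `W_i^* x = conj(w_i) x` with `Σ |w_i|² = 1`. -/
theorem stmt13 {n : ℕ} (hn : 2 ≤ n) {L : Type*} [NormedAddCommGroup L]
    [InnerProductSpace ℂ L] [CompleteSpace L]
    (W : Fin n → L →L[ℂ] L)
    (hisom : ∀ i j : Fin n, adjoint (W i) ∘L W j = if i = j then 1 else 0)
    (hcuntz : ∑ i : Fin n, W i ∘L adjoint (W i) = 1)
    (hirr : ∀ N : Submodule ℂ L, IsClosed (N : Set L) →
      (∀ i : Fin n, ∀ x ∈ N, W i x ∈ N ∧ adjoint (W i) x ∈ N) → N = ⊥ ∨ N = ⊤) :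
    Module.rank ℂ ↥(commPieceSub W) ≤ 1 ∧
    (commPieceSub W ≠ ⊥ → ∃ (x : L) (w : Fin n → ℂ), ‖x‖ = 1 ∧
      Submodule.span ℂ {x} = commPieceSub W ∧ (∑ i : Fin n, ‖w i‖ ^ 2) = 1 ∧
      ∀ i : Fin n, adjoint (W i) x = (starRingEnd ℂ) (w i) • x) :=
  stmt13_general W hisom hcuntz hirr
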